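/- arXiv:2205.11066 — 2 statements merged into one kernel-verified Lean document; each statement's English description precedes it below -/
import Mathlib

section
/- Let d ≥ 1, N ≥ 1, and let α(1),…,α(N) ∈ ℤ^d be pairwise distinct. Then there exist w(1),…,w(N) ∈ ℂ^d with |w(i)_k| = 1 for all i, k, such that the N×N complex matrix M with entries M_{ij} = ∏_{k=1}^d (w(i)_k)^{α(j)_k} (integer powers of nonzero complex numbers) is invertible. -/
open MeasureTheory

noncomputable section

def eNormSq (d : ℕ) (z : Fin d → ℂ) : ℝ := ∑ j, Complex.normSq (z j)

def eNorm (d : ℕ) (z : Fin d → ℂ) : ℝ := Real.sqrt (eNormSq d z)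

def eInner (d : ℕ) (z w : Fin d → ℂ) : ℂ := ∑ j, z j * (starRingEnd ℂ) (w j)

def fockIntegrand (d : ℕ) (f : (Fin d → ℂ) → ℂ) (z : Fin d → ℂ) : ℝ :=
  ‖f z‖ ^ 2 * Real.exp (-(eNormSq d z) / 2)

def MemFock (d : ℕ) (f : (Fin d → ℂ) → ℂ) : Prop :=
  Differentiable ℂ f ∧ Integrable (fockIntegrand d f)

def fockNorm (d : ℕ) (f : (Fin d → ℂ) → ℂ) : ℝ :=
  Real.sqrt (((2 * Real.pi) ^ d)⁻¹ * ∫ z, fockIntegrand d f z)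

def BddHyp (d : ℕ) (A : Matrix (Fin d) (Fin d) ℂ) (b : Fin d → ℂ) : Prop :=
  (∀ v, eNorm d (A.mulVec v) ≤ eNorm d v) ∧
  (∀ v, eNorm d (A.mulVec v) = eNorm d v → eInner d (A.mulVec v) b = 0)

def affMap (d : ℕ) (A : Matrix (Fin d) (Fin d) ℂ) (b : Fin d → ℂ) : (Fin d → ℂ) → (Fin d → ℂ) :=
  fun z => A.mulVec z + b

def IsCyclicVector (d : ℕ) (A : Matrix (Fin d) (Fin d) ℂ) (b : Fin d → ℂ)
    (h : (Fin d → ℂ) → ℂ) : Prop :=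
  MemFock d h ∧ ∀ g : (Fin d → ℂ) → ℂ, MemFock d g → ∀ ε : ℝ, 0 < ε →
    ∃ (m : ℕ) (c : ℕ → ℂ),
      fockNorm d (fun z => g z - ∑ n ∈ Finset.range (m + 1), c n * h ((affMap d A b)^[n] z)) < ε

def IsCyclicOp (d : ℕ) (A : Matrix (Fin d) (Fin d) ℂ) (b : Fin d → ℂ) : Prop :=
  ∃ h, IsCyclicVector d A b h

/-!
Pick a point `z` of the torus at which the characters `β ↦ z ^ β` of `ℤ^d` are pairwise distinct,
and put `w(i) = z ^ i`. Then `M_{ij} = (z ^ α(j)) ^ i` is the transposed Vandermonde matrix of the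
pairwise distinct nodes `z ^ α(j)`. For `z_k = exp (2πi t ^ (k + 1))` with `t` transcendental,
`z ^ β = 1` means that `t` is a root of `∑ β_k X ^ (k + 1) - m` for some integer `m`; the shift of
exponents keeps the coefficients `β_k` apart from `m`, so this polynomial vanishes only if `β = 0`.
-/

open Polynomial

theorem sum_intCast_mul_pow_succ_ne_intCast {A : Type*} [CommRing A] {t : A}
    (ht : Transcendental ℤ t) {d : ℕ} {β : Fin d → ℤ} (hβ : β ≠ 0) (m : ℤ) :
    ∑ k, (β k : A) * t ^ ((k : ℕ) + 1) ≠ m := by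
  obtain ⟨k₀, hk₀⟩ := Function.ne_iff.mp hβ
  set p : ℤ[X] := ∑ k : Fin d, monomial ((k : ℕ) + 1) (β k) - C m
  have hp : p.coeff ((k₀ : ℕ) + 1) = β k₀ := by
    simp only [p, coeff_sub, finsetSum_coeff, coeff_monomial, coeff_C, Nat.add_one_ne_zero,
      if_false, sub_zero, add_left_inj, Fin.val_inj, Finset.sum_ite_eq', Finset.mem_univ, if_true]
  intro h
  refine ht ⟨p, fun hp0 => hk₀ (by simpa [hp0] using hp.symm), ?_⟩
  simp [p, aeval_monomial, h]

theorem exists_norm_eq_one_injective_prod_zpow (d : ℕ) :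
    ∃ z : Fin d → ℂ, (∀ k, ‖z k‖ = 1) ∧
      Function.Injective (fun β : Fin d → ℤ => ∏ k, z k ^ β k) := by
  set t : ℝ := liouvilleNumber 2
  have ht : Transcendental ℤ t := transcendental_liouvilleNumber le_rfl
  set L : (Fin d → ℤ) → ℝ := fun β => ∑ k, (β k : ℝ) * t ^ ((k : ℕ) + 1)
  set z : Fin d → ℂ := fun k => Complex.exp ((2 * Real.pi * t ^ ((k : ℕ) + 1) : ℝ) * Complex.I)
  have hz : ∀ β, ∏ k, z k ^ β k = Complex.exp ((2 * Real.pi * L β : ℝ) * Complex.I) := by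
    intro β
    simp only [z, L, ← Complex.exp_int_mul, ← Complex.exp_sum]
    congr 1
    push_cast
    rw [Finset.mul_sum, Finset.sum_mul]
    exact Finset.sum_congr rfl fun k _ => by ring
  refine ⟨z, fun k => Complex.norm_exp_ofReal_mul_I _, fun β γ hβγ => ?_⟩
  obtain ⟨n, hn⟩ := Complex.exp_eq_exp_iff_exists_int.mp ((hz β).symm.trans (hβγ.trans (hz γ)))
  have hC : ((2 * Real.pi * L β : ℝ) : ℂ) = (2 * Real.pi * (L γ + n) : ℝ) :=
    mul_right_cancel₀ Complex.I_ne_zero (by push_cast at hn ⊢; linear_combination hn)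
  have hL : L β = L γ + n := mul_left_cancel₀ (by positivity) (Complex.ofReal_injective hC)
  have hL_sub : L (β - γ) = n := by
    simp only [L, Pi.sub_apply, Int.cast_sub, sub_mul, Finset.sum_sub_distrib] at hL ⊢
    linarith
  by_contra hne
  exact sum_intCast_mul_pow_succ_ne_intCast ht (sub_ne_zero.mpr hne) n hL_sub

theorem vandermonde_like_invertible_general
    (d N : ℕ)
    (α : Fin N → (Fin d → ℤ)) (hα : Function.Injective α) :
    ∃ w : Fin N → (Fin d → ℂ),
      (∀ i k, ‖w i k‖ = 1) ∧
      IsUnit (Matrix.of (fun i j : Fin N => ∏ k, (w i k) ^ (α j k))).det := by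
  obtain ⟨z, hz_norm, hz_inj⟩ := exists_norm_eq_one_injective_prod_zpow d
  refine ⟨fun i k => z k ^ (i : ℕ), fun i k => by rw [norm_pow, hz_norm, one_pow], ?_⟩
  have hM : Matrix.of (fun i j : Fin N => ∏ k, (z k ^ (i : ℕ)) ^ α j k)
      = (Matrix.vandermonde fun j => ∏ k, z k ^ α j k).transpose := by
    ext i j
    rw [Matrix.of_apply, Matrix.transpose_apply, Matrix.vandermonde_apply, ← Finset.prod_pow]
    refine Finset.prod_congr rfl fun k _ => ?_
    rw [← zpow_natCast, ← zpow_natCast, ← zpow_mul, ← zpow_mul, mul_comm]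
  rw [hM, Matrix.det_transpose, isUnit_iff_ne_zero, Matrix.det_vandermonde_ne_zero_iff]
  exact hz_inj.comp hα

/-- Invertibility of a Vandermonde-like matrix with unimodular entries. -/
theorem vandermonde_like_invertible
    (d N : ℕ) (hd : 1 ≤ d) (hN : 1 ≤ N)
    (α : Fin N → (Fin d → ℤ)) (hα : Function.Injective α) :
    ∃ w : Fin N → (Fin d → ℂ),
      (∀ i k, ‖w i k‖ = 1) ∧
      IsUnit (Matrix.of (fun i j : Fin N => ∏ k, (w i k) ^ (α j k))).det :=
  vandermonde_like_invertible_general d N α hα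
end
end

section
/- Let d ≥ 1, let A be a d×d complex matrix and b ∈ ℂ^d, suppose the pair (A,b) satisfies the standing boundedness hypothesis, and set φ(z) = Az + b. Then C_φ is not supercyclic for the topology of pointwise convergence: there is no f ∈ F(ℂ^d) such that for every g ∈ F(ℂ^d), every finite set S ⊆ ℂ^d and every ε > 0 there exist n ∈ ℕ and c ∈ ℂ with |c · f(φ^∘n(z)) − g(z)| < ε for all z ∈ S (φ^∘n the n-fold iterate of φ). -/
/-! The boundedness hypothesis says that `A` is a contraction and that `b` is orthogonal to the
vectors fixed by `A`. Fixed vectors of a contraction are fixed by its adjoint, so they are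
orthogonal to the range of `1 - A`; in finite dimension this range is therefore their whole
orthogonal complement, and `b` lies in it: `φ` has a fixed point `p`. Since
`φ w - p = A (w - p)`, every orbit of `φ` stays within its initial distance of `p`, so `f` is
bounded along it. Now approximate, at the two points `p` and `z`, a Fock function equal to `1`
at `p` and to `1 + t` at `z`: the value at the fixed point `p` bounds the scalar `c`, so
`c • f ∘ φⁿ` stays bounded at `z` and cannot reach `1 + t` once `t` is large. -/

open MeasureTheory

noncomputable section

open Function WithLp Matrix

section Contraction

variable {𝕜 E : Type*} [RCLike 𝕜] [NormedAddCommGroup E] [InnerProductSpace 𝕜 E]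

theorem LinearMap.orthogonal_range_one_sub_le_ker_one_sub {T : E →ₗ[𝕜] E}
    (hT : ∀ x, ‖T x‖ ≤ ‖x‖) : (LinearMap.range (1 - T))ᗮ ≤ LinearMap.ker (1 - T) := by
  intro x hx
  have hinner : ∀ y, inner 𝕜 (T y) x = inner 𝕜 y x := fun y => by
    have := Submodule.inner_right_of_mem_orthogonal (LinearMap.mem_range_self (1 - T) y) hx
    rwa [LinearMap.sub_apply, Module.End.one_apply, inner_sub_left, sub_eq_zero, eq_comm] at this
  rw [LinearMap.mem_ker, LinearMap.sub_apply, Module.End.one_apply, sub_eq_zero, eq_comm]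
  exact eq_of_norm_le_re_inner_eq_norm_sq (hT x) (by rw [hinner, inner_self_eq_norm_sq])

theorem LinearMap.exists_sub_apply_eq_of_mem_orthogonal_ker [FiniteDimensional 𝕜 E]
    {T : E →ₗ[𝕜] E} (hT : ∀ x, ‖T x‖ ≤ ‖x‖) {b : E} (hb : b ∈ (LinearMap.ker (1 - T))ᗮ) :
    ∃ x, x - T x = b := by
  have := Submodule.orthogonal_le (orthogonal_range_one_sub_le_ker_one_sub hT) hb
  rwa [Submodule.orthogonal_orthogonal] at this

end Contraction

section Euclidean

variable {d : ℕ}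

theorem eNorm_eq_norm_toLp (v : Fin d → ℂ) : eNorm d v = ‖toLp 2 v‖ := by
  simp [EuclideanSpace.norm_eq, eNorm, eNormSq, Complex.sq_norm]

theorem eInner_eq_inner_toLp (v w : Fin d → ℂ) :
    eInner d v w = inner ℂ (toLp 2 w) (toLp 2 v) := by
  simp [eInner, PiLp.inner_apply]

theorem norm_le_eNorm (v : Fin d → ℂ) : ‖v‖ ≤ eNorm d v := by
  rw [eNorm_eq_norm_toLp, pi_norm_le_iff_of_nonneg (norm_nonneg _)]
  exact fun i => PiLp.norm_apply_le (toLp 2 v) i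

theorem sq_norm_apply_le_eNormSq (v : Fin d → ℂ) (i : Fin d) : ‖v i‖ ^ 2 ≤ eNormSq d v := by
  rw [Complex.sq_norm]
  exact Finset.single_le_sum (fun j _ => Complex.normSq_nonneg (v j)) (Finset.mem_univ i)

end Euclidean

section AffineDynamics

variable {d : ℕ} {A : Matrix (Fin d) (Fin d) ℂ} {b p : Fin d → ℂ}

theorem BddHyp.exists_isFixedPt_affMap (h : BddHyp d A b) : ∃ p, IsFixedPt (affMap d A b) p := by
  set T := Matrix.toLpLin 2 2 A
  have hT : ∀ x, ‖T x‖ ≤ ‖x‖ := fun x => by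
    have := h.1 (ofLp x)
    rwa [eNorm_eq_norm_toLp, eNorm_eq_norm_toLp, toLp_ofLp] at this
  have hb : toLp 2 b ∈ (LinearMap.ker (1 - T))ᗮ := by
    intro x hx
    have hAx : A *ᵥ ofLp x = ofLp x := by
      simpa [T, sub_eq_zero, eq_comm] using congrArg ofLp (LinearMap.mem_ker.mp hx)
    have := h.2 (ofLp x) (by rw [hAx])
    rw [hAx, eInner_eq_inner_toLp, toLp_ofLp] at this
    exact inner_eq_zero_symm.mp this
  obtain ⟨x, hx⟩ := LinearMap.exists_sub_apply_eq_of_mem_orthogonal_ker hT hb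
  have hx' : ofLp x - A *ᵥ ofLp x = b := congrArg ofLp hx
  refine ⟨ofLp x, ?_⟩
  rw [IsFixedPt, affMap, ← hx', add_sub_cancel]

theorem affMap_sub_of_isFixedPt (hp : IsFixedPt (affMap d A b) p) (w : Fin d → ℂ) :
    affMap d A b w - p = A *ᵥ (w - p) := by
  nth_rewrite 1 [← hp]
  simp only [affMap, mulVec_sub]
  abel

theorem eNorm_affMap_iterate_sub_le (hA : ∀ v, eNorm d (A *ᵥ v) ≤ eNorm d v)
    (hp : IsFixedPt (affMap d A b) p) (z : Fin d → ℂ) (n : ℕ) :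
    eNorm d ((affMap d A b)^[n] z - p) ≤ eNorm d (z - p) := by
  induction n with
  | zero => rfl
  | succ n ih =>
    rw [iterate_succ_apply', affMap_sub_of_isFixedPt hp]
    exact (hA _).trans ih

theorem exists_bound_comp_affMap_iterate {f : (Fin d → ℂ) → ℂ} (hf : Continuous f)
    (hA : ∀ v, eNorm d (A *ᵥ v) ≤ eNorm d v) (hp : IsFixedPt (affMap d A b) p)
    (z : Fin d → ℂ) : ∃ M, ∀ n, ‖f ((affMap d A b)^[n] z)‖ ≤ M := by
  obtain ⟨M, hM⟩ :=
    (isCompact_closedBall p (eNorm d (z - p))).exists_bound_of_continuousOn hf.continuousOn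
  refine ⟨M, fun n => hM _ ?_⟩
  rw [Metric.mem_closedBall, dist_eq_norm]
  exact (norm_le_eNorm _).trans (eNorm_affMap_iterate_sub_le hA hp z n)

end AffineDynamics

section Fock

variable {d : ℕ}

theorem integrable_exp_neg_mul_eNormSq {a : ℝ} (ha : 0 < a) :
    Integrable (fun z : Fin d → ℂ => Real.exp (-a * eNormSq d z)) := by
  have hℂ : Integrable (fun w : ℂ => Real.exp (-a * Complex.normSq w)) := by
    convert (GaussianFourier.integrable_cexp_neg_mul_sq_norm_add (V := ℂ) (b := a)
      (by simpa) 0 0).norm using 2 with w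
    simp [Complex.norm_exp, ← Complex.ofReal_pow, Complex.sq_norm]
  simpa [eNormSq, Finset.mul_sum, ← Real.exp_sum, ← volume_pi] using
    Integrable.fintype_prod (fun _ : Fin d => hℂ)

theorem memFock_of_sq_norm_le {g : (Fin d → ℂ) → ℂ} (hg : Differentiable ℂ g) {C : ℝ}
    (hC : ∀ w, ‖g w‖ ^ 2 ≤ C * Real.exp (eNormSq d w / 4)) : MemFock d g := by
  have hcont_sq : Continuous (eNormSq d) := by unfold eNormSq; fun_prop
  have hcont_g := hg.continuous
  refine ⟨hg, ((integrable_exp_neg_mul_eNormSq (a := 1 / 4) (by norm_num)).const_mul C).mono'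
    (Continuous.aestronglyMeasurable (by unfold fockIntegrand; fun_prop)) (.of_forall fun w => ?_)⟩
  rw [Real.norm_of_nonneg (by unfold fockIntegrand; positivity)]
  calc fockIntegrand d g w
      ≤ C * Real.exp (eNormSq d w / 4) * Real.exp (-eNormSq d w / 2) := by
        unfold fockIntegrand; gcongr; exact hC w
    _ = C * Real.exp (-(1 / 4) * eNormSq d w) := by
        rw [mul_assoc, ← Real.exp_add]; ring_nf

theorem memFock_const_add_mul_apply (α β : ℂ) (i : Fin d) :
    MemFock d (fun w => α + β * w i) := by
  refine memFock_of_sq_norm_le (by fun_prop) (C := 2 * ‖α‖ ^ 2 + 8 * ‖β‖ ^ 2) fun w => ?_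
  have hwi := sq_norm_apply_le_eNormSq w i
  have hexp := Real.add_one_le_exp (eNormSq d w / 4)
  calc ‖α + β * w i‖ ^ 2 ≤ (‖α‖ + ‖β‖ * ‖w i‖) ^ 2 := by
        gcongr; exact (norm_add_le _ _).trans_eq (by rw [norm_mul])
    _ ≤ 2 * ‖α‖ ^ 2 + 2 * ‖β‖ ^ 2 * ‖w i‖ ^ 2 := by
        nlinarith [sq_nonneg (‖α‖ - ‖β‖ * ‖w i‖)]
    _ ≤ (2 * ‖α‖ ^ 2 + 8 * ‖β‖ ^ 2) * (eNormSq d w / 4 + 1) := by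
        nlinarith [sq_nonneg ‖α‖, mul_le_mul_of_nonneg_left hwi (sq_nonneg ‖β‖)]
    _ ≤ (2 * ‖α‖ ^ 2 + 8 * ‖β‖ ^ 2) * Real.exp (eNormSq d w / 4) := by gcongr

end Fock

theorem exists_not_approx_at_isFixedPt_and_bounded_orbit {X : Type*} {φ : X → X} {f : X → ℂ}
    {p z : X} (hp : IsFixedPt φ p) {M : ℝ} (hM : ∀ n, ‖f (φ^[n] z)‖ ≤ M) :
    ∃ t : ℝ, ∀ (n : ℕ) (c : ℂ), ‖c * f (φ^[n] p) - 1‖ < 1 / 2 →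
      1 / 2 ≤ ‖c * f (φ^[n] z) - (1 + t)‖ := by
  -- approximating `1` at `p` forces `‖c‖ < 3 / (2 * ‖f p‖)`, so `‖c * f (φ^[n] z)‖ < t / 2`
  set t := 3 * M / ‖f p‖
  refine ⟨t, fun n c hcp => ?_⟩
  rw [iterate_fixed hp] at hcp
  by_contra! hcz
  have hM0 : 0 ≤ M := (norm_nonneg _).trans (hM 0)
  have hfp : 0 < ‖f p‖ := by
    refine norm_pos_iff.mpr fun h0 => ?_
    norm_num [h0] at hcp
  have hcfp : ‖c‖ * ‖f p‖ < 3 / 2 := by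
    have := norm_sub_norm_le (c * f p) 1
    rw [norm_mul, norm_one] at this
    linarith
  have hnorm_t : ‖1 + (t : ℂ)‖ = 1 + t := by
    exact_mod_cast Complex.norm_of_nonneg (by positivity : 0 ≤ 1 + t)
  have hcM : t < ‖c‖ * M := by
    have := norm_sub_norm_le (1 + (t : ℂ)) (c * f (φ^[n] z))
    rw [norm_sub_rev, hnorm_t, norm_mul] at this
    nlinarith [mul_le_mul_of_nonneg_left (hM n) (norm_nonneg c)]
  rw [div_lt_iff₀ hfp] at hcM
  nlinarith [mul_le_mul_of_nonneg_right hcfp.le hM0]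

/-- Composition operators on the Fock space are never pointwise supercyclic. -/
theorem not_pointwise_supercyclic
    (d : ℕ) (hd : 1 ≤ d) (A : Matrix (Fin d) (Fin d) ℂ) (b : Fin d → ℂ)
    (hbdd : BddHyp d A b) :
    ¬ ∃ f : (Fin d → ℂ) → ℂ, MemFock d f ∧
      ∀ g : (Fin d → ℂ) → ℂ, MemFock d g →
        ∀ S : Finset (Fin d → ℂ), ∀ ε : ℝ, 0 < ε →
          ∃ (n : ℕ) (c : ℂ), ∀ z ∈ S,
            ‖c * f ((affMap d A b)^[n] z) - g z‖ < ε := by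
  rintro ⟨f, hf, hsc⟩
  obtain ⟨p, hp⟩ := hbdd.exists_isFixedPt_affMap
  let i : Fin d := ⟨0, hd⟩
  let z := update p i (p i + 1)
  obtain ⟨M, hM⟩ := exists_bound_comp_affMap_iterate hf.1.continuous hbdd.1 hp z
  obtain ⟨t, ht⟩ := exists_not_approx_at_isFixedPt_and_bounded_orbit hp hM
  obtain ⟨n, c, hc⟩ := hsc (fun w => (1 - t * p i) + t * w i) (memFock_const_add_mul_apply _ _ i)
    {p, z} (1 / 2) (by norm_num)
  have hcp := hc p (by simp)
  have hcz := hc z (by simp)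
  have hgz : 1 - t * p i + t * z i = 1 + (t : ℂ) := by
    rw [show z i = p i + 1 from update_self i _ p]
    ring
  rw [sub_add_cancel] at hcp
  rw [hgz] at hcz
  linarith [ht n c hcp]
end
end
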